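/- Let s, t be real numbers with 1 ≤ t ≤ s ≤ 3t/2, and let (β, γ) with β ≥ γ ≥ 0 be the unique solution of the system sinh²(β) + sinh²(γ) = sinh²(2s) + sinh²(s) and sinh(β)·sinh(γ) = sinh(2t)·sinh(t). Then |β − 2s| ≤ 1 and |γ + 2s − 3t| ≤ 1. -/

import Mathlib

/-!
Write `B = sinh β`, `G = sinh γ` and `K = sinh (2t) sinh t`. As `G ≤ B` and `sinh s ≤ sinh (2s)`,
the first equation traps `B²` between `sinh (2s)² / 2` and `2 sinh (2s)²`; since
`sinh (x + 1) ≥ e sinh x` and `e² > 2`, this pins `β` to within `1` of `2s`.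
Then `G = K / B`. The products `sinh (c - u) sinh u = (cosh c - cosh (c - 2u)) / 2` decrease
in `u ≥ c / 2`; with `c = 3t ± 1` and `u = 2s ∈ [2t, 3t]` this compares
`sinh (3t - 2s ± 1) sinh (2s)` with `K` at the ends of that range, and the bounds on `B` turn
these comparisons into `|γ - (3t - 2s)| ≤ 1`.
-/

open Real

lemma sq_le_two_mul_sq_of_add_sq_eq {b g m a : ℝ} (h : b ^ 2 + g ^ 2 = m ^ 2 + a ^ 2)
    (hgb : g ^ 2 ≤ b ^ 2) (ham : a ^ 2 ≤ m ^ 2) : m ^ 2 ≤ 2 * b ^ 2 ∧ b ^ 2 ≤ 2 * m ^ 2 :=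
  ⟨by nlinarith [sq_nonneg a], by nlinarith [sq_nonneg g]⟩

lemma le_of_mul_eq_of_two_mul_sq_le {b g k m x : ℝ} (hb : 0 < b) (hx : 0 ≤ x)
    (hgb : g * b = k) (hm : m ^ 2 ≤ 2 * b ^ 2) (hk : 2 * k ^ 2 ≤ (x * m) ^ 2) : g ≤ x := by
  have hsq : (g * b) ^ 2 ≤ (x * b) ^ 2 := by
    rw [hgb]; nlinarith [mul_le_mul_of_nonneg_left hm (sq_nonneg x)]
  exact le_of_mul_le_mul_right (abs_le_of_sq_le_sq' hsq (by positivity)).2 hb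

lemma le_of_mul_eq_of_sq_le_two_mul {b g k m y : ℝ} (hb : 0 < b) (hk : 0 ≤ k)
    (hgb : g * b = k) (hm : b ^ 2 ≤ 2 * m ^ 2) (hy : 2 * (y * m) ^ 2 ≤ k ^ 2) : y ≤ g := by
  have hsq : (y * b) ^ 2 ≤ k ^ 2 := by
    nlinarith [mul_le_mul_of_nonneg_left hm (sq_nonneg y)]
  exact le_of_mul_le_mul_right (hgb ▸ (abs_le_of_sq_le_sq' hsq hk).2) hb

lemma exp_one_mul_sinh_le_sinh_add_one (x : ℝ) : exp 1 * sinh x ≤ sinh (x + 1) := by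
  have key : sinh (x + 1) - exp 1 * sinh x = sinh 1 * exp (-x) := by
    rw [sinh_add, ← cosh_add_sinh 1, ← cosh_sub_sinh x]; ring
  linarith [mul_pos (sinh_pos_iff.2 one_pos) (exp_pos (-x))]

lemma two_mul_sinh_sq_le_sinh_add_one_sq {x : ℝ} (hx : 0 ≤ x) :
    2 * sinh x ^ 2 ≤ sinh (x + 1) ^ 2 := by
  have he : 2 ≤ exp 1 ^ 2 := by nlinarith [add_one_le_exp 1]
  calc 2 * sinh x ^ 2 ≤ (exp 1 * sinh x) ^ 2 := by
        rw [mul_pow]; exact mul_le_mul_of_nonneg_right he (sq_nonneg _)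
    _ ≤ sinh (x + 1) ^ 2 :=
      pow_le_pow_left₀ (by positivity) (exp_one_mul_sinh_le_sinh_add_one x) 2

lemma le_add_one_of_sinh_sq_le_two_mul_sinh_sq {a b : ℝ} (hb : 0 ≤ b)
    (h : sinh a ^ 2 ≤ 2 * sinh b ^ 2) : a ≤ b + 1 := by
  rw [← sinh_le_sinh]
  exact (abs_le_of_sq_le_sq' (h.trans (two_mul_sinh_sq_le_sinh_add_one_sq hb))
    (sinh_nonneg_iff.2 (by linarith))).2

lemma sinh_sub_mul_sinh_le_of_le {c u v : ℝ} (hu : c ≤ 2 * u) (huv : u ≤ v) :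
    sinh (c - v) * sinh v ≤ sinh (c - u) * sinh u := by
  have key (w : ℝ) : 2 * (sinh (c - w) * sinh w) = cosh c - cosh (c - 2 * w) := by
    have hadd := cosh_add (c - w) w
    have hsub := cosh_sub (c - w) w
    rw [sub_add_cancel] at hadd
    rw [show c - w - w = c - 2 * w by ring] at hsub
    linarith
  have hcosh : cosh (c - 2 * u) ≤ cosh (c - 2 * v) :=
    cosh_le_cosh.2 (by rw [abs_of_nonpos, abs_of_nonpos] <;> linarith)
  linarith [key u, key v]

lemma two_mul_sinh_mul_sinh_le_sinh_add {x y : ℝ} (hx : 0 ≤ x) (hy : 0 ≤ y) :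
    2 * (sinh x * sinh y) ≤ sinh (x + y) := by
  have hx' := sinh_nonneg_iff.2 hx
  have hy' := sinh_nonneg_iff.2 hy
  rw [sinh_add]
  nlinarith [mul_le_mul_of_nonneg_left (sinh_lt_cosh y).le hx',
    mul_le_mul_of_nonneg_left (sinh_lt_cosh x).le hy']

lemma two_mul_sq_sinh_two_mul_mul_sinh_le {s t : ℝ} (ht : 1 ≤ t) (hts : t ≤ s)
    (hs : s ≤ 3 * t / 2) :
    2 * (sinh (2 * t) * sinh t) ^ 2 ≤ (sinh (3 * t - 2 * s + 1) * sinh (2 * s)) ^ 2 := by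
  have hK : 0 ≤ sinh (2 * t) * sinh t :=
    mul_nonneg (sinh_nonneg_iff.2 (by linarith)) (sinh_nonneg_iff.2 (by linarith))
  have hsinh3 : 0 ≤ sinh (3 * t) := sinh_nonneg_iff.2 (by linarith)
  have hprod : 2 * (sinh (2 * t) * sinh t) ≤ sinh (3 * t - 2 * s + 1) * sinh (2 * s) :=
    calc 2 * (sinh (2 * t) * sinh t) ≤ sinh (2 * t + t) :=
          two_mul_sinh_mul_sinh_le_sinh_add (by linarith) (by linarith)
      _ = 1 * sinh (3 * t) := by ring_nf
      _ ≤ sinh 1 * sinh (3 * t) :=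
          mul_le_mul_of_nonneg_right (self_le_sinh_iff.2 zero_le_one) hsinh3
      _ = sinh (3 * t + 1 - 3 * t) * sinh (3 * t) := by ring_nf
      _ ≤ sinh (3 * t + 1 - 2 * s) * sinh (2 * s) :=
          sinh_sub_mul_sinh_le_of_le (by linarith) (by linarith)
      _ = sinh (3 * t - 2 * s + 1) * sinh (2 * s) := by ring_nf
  nlinarith

lemma two_mul_sq_sinh_mul_sinh_two_mul_le {s t : ℝ} (ht : 1 ≤ t) (hts : t ≤ s)
    (h : 0 ≤ 3 * t - 2 * s - 1) :
    2 * (sinh (3 * t - 2 * s - 1) * sinh (2 * s)) ^ 2 ≤ (sinh (2 * t) * sinh t) ^ 2 := by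
  have hprod : 0 ≤ sinh (3 * t - 2 * s - 1) * sinh (2 * s) :=
    mul_nonneg (sinh_nonneg_iff.2 h) (sinh_nonneg_iff.2 (by linarith))
  have hmono : sinh (3 * t - 2 * s - 1) * sinh (2 * s) ≤ sinh (t - 1) * sinh (2 * t) := by
    have := sinh_sub_mul_sinh_le_of_le (c := 3 * t - 1) (u := 2 * t) (v := 2 * s)
      (by linarith) (by linarith)
    rwa [show 3 * t - 1 - 2 * s = 3 * t - 2 * s - 1 by ring,
      show 3 * t - 1 - 2 * t = t - 1 by ring] at this
  have hshift := two_mul_sinh_sq_le_sinh_add_one_sq (x := t - 1) (by linarith)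
  rw [sub_add_cancel] at hshift
  calc 2 * (sinh (3 * t - 2 * s - 1) * sinh (2 * s)) ^ 2
        ≤ 2 * (sinh (t - 1) * sinh (2 * t)) ^ 2 := by gcongr
    _ = 2 * sinh (t - 1) ^ 2 * sinh (2 * t) ^ 2 := by ring
    _ ≤ sinh t ^ 2 * sinh (2 * t) ^ 2 := by gcongr
    _ = (sinh (2 * t) * sinh t) ^ 2 := by ring

theorem beta_gamma_estimates (s t β γ : ℝ) (ht : 1 ≤ t) (hts : t ≤ s)
    (hs : s ≤ 3 * t / 2) (hβγ : γ ≤ β) (hγ : 0 ≤ γ)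
    (h1 : sinh β ^ 2 + sinh γ ^ 2 = sinh (2 * s) ^ 2 + sinh s ^ 2)
    (h2 : sinh β * sinh γ = sinh (2 * t) * sinh t) :
    |β - 2 * s| ≤ 1 ∧ |γ + 2 * s - 3 * t| ≤ 1 := by
  have hG : 0 ≤ sinh γ := sinh_nonneg_iff.2 hγ
  have hK : 0 < sinh (2 * t) * sinh t :=
    mul_pos (sinh_pos_iff.2 (by linarith)) (sinh_pos_iff.2 (by linarith))
  have hB : 0 < sinh β := pos_of_mul_pos_left (h2 ▸ hK) hG
  have hGB : sinh γ * sinh β = sinh (2 * t) * sinh t := by rw [mul_comm, h2]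
  obtain ⟨hMB, hBM⟩ := sq_le_two_mul_sq_of_add_sq_eq h1
    (pow_le_pow_left₀ hG (sinh_le_sinh.2 hβγ) 2)
    (pow_le_pow_left₀ (sinh_nonneg_iff.2 (by linarith)) (sinh_le_sinh.2 (by linarith)) 2)
  have hβ_le : β ≤ 2 * s + 1 := le_add_one_of_sinh_sq_le_two_mul_sinh_sq (by linarith) hBM
  have hβ_ge : 2 * s ≤ β + 1 := le_add_one_of_sinh_sq_le_two_mul_sinh_sq (by linarith) hMB
  have hγ_le : γ ≤ 3 * t - 2 * s + 1 :=
    sinh_le_sinh.1 <| le_of_mul_eq_of_two_mul_sq_le hB (sinh_nonneg_iff.2 (by linarith)) hGB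
      hMB (two_mul_sq_sinh_two_mul_mul_sinh_le ht hts hs)
  have hγ_ge : 3 * t - 2 * s - 1 ≤ γ := by
    rcases le_total (3 * t - 2 * s - 1) 0 with hneg | hpos
    · linarith
    · exact sinh_le_sinh.1 <| le_of_mul_eq_of_sq_le_two_mul hB hK.le hGB hBM
        (two_mul_sq_sinh_mul_sinh_two_mul_le ht hts hpos)
  constructor <;> rw [abs_le] <;> constructor <;> linarith
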